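/- arXiv:1411.4847 — 2 statements merged into one kernel-verified Lean document; each statement's English description precedes it below -/
import Mathlib

section
/- Let F, G : B(r) → ℝ be smooth functions on a ball in ℝⁿ, each having the origin as an isolated critical point. Suppose there is ε > 0 with ‖∇G(x)‖ ≥ ε‖∇F(x)‖ for all x in a punctured ball around 0. Then there exists C = 2/ε such that for all real a, b with C < a < b, the homotopy G_s := (1/(sb+(1−s)a))F + G, s ∈ [0,1], has 0 as a uniformly isolated critical point: there exists r₁ > 0 such that for all s ∈ [0,1] and all x with 0 < ‖x‖ < r₁, ∇G_s(x) ≠ 0. -/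
lemma grad_comb {n : ℕ} (F G : EuclideanSpace ℝ (Fin n) → ℝ)
    (hF : ContDiff ℝ (⊤ : ℕ∞) F) (hG : ContDiff ℝ (⊤ : ℕ∞) G) (c : ℝ)
    (x : EuclideanSpace ℝ (Fin n)) :
    gradient (fun y => c * F y + G y) x = c • gradient F x + gradient G x := by
  have hFd : HasGradientAt F (gradient F x) x :=
    (hF.differentiable (by simp) x).hasGradientAt
  have hGd : HasGradientAt G (gradient G x) x :=
    (hG.differentiable (by simp) x).hasGradientAt
  have hFf := hasGradientAt_iff_hasFDerivAt.mp hFd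
  have hGf := hasGradientAt_iff_hasFDerivAt.mp hGd
  have : HasFDerivAt (fun y => c * F y + G y)
      (c • (InnerProductSpace.toDual ℝ _ (gradient F x)) +
        InnerProductSpace.toDual ℝ _ (gradient G x)) x :=
    (hFf.const_smul c).add hGf
  have h2 : HasGradientAt (fun y => c * F y + G y)
      (c • gradient F x + gradient G x) x := by
    rw [hasGradientAt_iff_hasFDerivAt]
    refine this.congr_fderiv ?_
    simp [map_add, map_smul]
  exact h2.gradient

/-- If `‖∇G‖ ≥ ε‖∇F‖` on a punctured ball about an isolated critical point `0` of both
`F` and `G`, then for `2/ε < a < b` the origin is a uniformly isolated critical point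
of the homotopy `G_s = (1/(sb+(1-s)a))F + G`. -/
theorem stmt_2 {n : ℕ}
    (F G : EuclideanSpace ℝ (Fin n) → ℝ)
    (hF : ContDiff ℝ (⊤ : ℕ∞) F) (hG : ContDiff ℝ (⊤ : ℕ∞) G)
    (hF0 : gradient F 0 = 0) (hG0 : gradient G 0 = 0)
    (r₀ : ℝ) (hr₀ : 0 < r₀)
    (hFiso : ∀ x : EuclideanSpace ℝ (Fin n), 0 < ‖x‖ → ‖x‖ < r₀ → gradient F x ≠ 0)
    (hGiso : ∀ x : EuclideanSpace ℝ (Fin n), 0 < ‖x‖ → ‖x‖ < r₀ → gradient G x ≠ 0)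
    (ε : ℝ) (hε : 0 < ε)
    (hlow : ∀ x : EuclideanSpace ℝ (Fin n), 0 < ‖x‖ → ‖x‖ < r₀ →
      ε * ‖gradient F x‖ ≤ ‖gradient G x‖)
    (a b : ℝ) (ha : 2 / ε < a) (hab : a < b) :
    ∃ r₁ > 0, ∀ s ∈ Set.Icc (0:ℝ) 1, ∀ x : EuclideanSpace ℝ (Fin n),
      0 < ‖x‖ → ‖x‖ < r₁ →
      gradient (fun y => (s * b + (1 - s) * a)⁻¹ * F y + G y) x ≠ 0 := by
  refine ⟨r₀, hr₀, ?_⟩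
  rintro s ⟨hs0, hs1⟩ x hx hxr hgrad
  set c := s * b + (1 - s) * a with hc
  have ha0 : 0 < a := lt_of_le_of_lt (by positivity) ha
  have hca : a ≤ c := by nlinarith
  have hc0 : 0 < c := lt_of_lt_of_le ha0 hca
  rw [grad_comb F G hF hG] at hgrad
  have hGeq : gradient G x = -(c⁻¹ • gradient F x) := by
    rw [eq_neg_iff_add_eq_zero, add_comm]; exact hgrad
  have hnorm : ‖gradient G x‖ = c⁻¹ * ‖gradient F x‖ := by
    rw [hGeq, norm_neg, norm_smul, Real.norm_eq_abs, abs_of_pos (by positivity)]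
  have h1 := hlow x hx hxr
  have hF0' : ‖gradient F x‖ ≠ 0 := norm_ne_zero_iff.mpr (hFiso x hx hxr)
  have hFpos : 0 < ‖gradient F x‖ := lt_of_le_of_lt (le_of_eq rfl) (lt_of_le_of_ne (norm_nonneg _) (Ne.symm hF0'))
  -- ε ≤ c⁻¹ * ... leads to ε ≤ c⁻¹, but c > 2/ε so c⁻¹ < ε/2 < ε
  have hinv : c⁻¹ < ε / 2 := by
    rw [inv_lt_iff_one_lt_mul₀ hc0]
    have h2ε : 2 / ε < c := lt_of_lt_of_le ha hca
    rw [div_lt_iff₀ hε] at h2ε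
    nlinarith
  rw [hnorm] at h1
  nlinarith
end

section
/- Let F, G : B(r) → ℝ be smooth with 0 an isolated critical point of each, and suppose the ratio h(x) = ‖∇F(x)‖/‖∇G(x)‖ is unbounded as x → 0 in a punctured ball where neither gradient vanishes. Then for any reals 0 < a < b, the homotopy F_s(x) = F(x) + (sb+(1−s)a)G(x) has 0 as a uniformly isolated critical point: there exists r₁ > 0 such that ‖∇F_s(x)‖ ≥ b‖∇G(x)‖ > 0 for all s ∈ [0,1] and 0 < ‖x‖ < r₁. -/
open InnerProductSpace

lemma grad_combo {n : ℕ} (F G : EuclideanSpace ℝ (Fin n) → ℝ)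
    (hF : ContDiff ℝ (⊤ : ℕ∞) F) (hG : ContDiff ℝ (⊤ : ℕ∞) G) (c : ℝ)
    (x : EuclideanSpace ℝ (Fin n)) :
    gradient (fun y => F y + c * G y) x = gradient F x + c • gradient G x := by
  have h1 : HasGradientAt F (gradient F x) x :=
    (hF.differentiable (by simp) x).hasGradientAt
  have h2 : HasGradientAt G (gradient G x) x :=
    (hG.differentiable (by simp) x).hasGradientAt
  have h3 := h1.hasFDerivAt.add (h2.hasFDerivAt.const_mul c)
  have h4 : HasGradientAt (fun y => F y + c * G y)
      (gradient F x + c • gradient G x) x := by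
    rw [hasGradientAt_iff_hasFDerivAt]
    convert h3 using 1
    case e'_12 => simp [map_add, map_smul]
    all_goals rfl
  exact h4.gradient

/-- If the ratio `‖∇F‖/‖∇G‖` is unbounded as `x → 0`, then for any `0 < a < b` the
homotopy `F_s = F + (sb+(1-s)a)G` has `0` as a uniformly isolated critical point,
with the quantitative bound `‖∇F_s(x)‖ ≥ b‖∇G(x)‖ > 0` on a punctured ball. -/
theorem stmt_3 {n : ℕ}
    (F G : EuclideanSpace ℝ (Fin n) → ℝ)
    (hF : ContDiff ℝ (⊤ : ℕ∞) F) (hG : ContDiff ℝ (⊤ : ℕ∞) G)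
    (hF0 : gradient F 0 = 0) (hG0 : gradient G 0 = 0)
    (r₀ : ℝ) (hr₀ : 0 < r₀)
    (hFiso : ∀ x : EuclideanSpace ℝ (Fin n), 0 < ‖x‖ → ‖x‖ < r₀ → gradient F x ≠ 0)
    (hGiso : ∀ x : EuclideanSpace ℝ (Fin n), 0 < ‖x‖ → ‖x‖ < r₀ → gradient G x ≠ 0)
    (hunb : ∀ M : ℝ, ∃ δ > 0, ∀ x : EuclideanSpace ℝ (Fin n), 0 < ‖x‖ → ‖x‖ < δ →
      M * ‖gradient G x‖ < ‖gradient F x‖)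
    (a b : ℝ) (ha : 0 < a) (hab : a < b) :
    ∃ r₁ > 0, ∀ s ∈ Set.Icc (0:ℝ) 1, ∀ x : EuclideanSpace ℝ (Fin n),
      0 < ‖x‖ → ‖x‖ < r₁ →
      0 < b * ‖gradient G x‖ ∧
      b * ‖gradient G x‖ ≤
        ‖gradient (fun y => F y + (s * b + (1 - s) * a) * G y) x‖ := by
  obtain ⟨δ, hδ, hδ'⟩ := hunb (2 * b)
  refine ⟨min δ r₀, lt_min hδ hr₀, ?_⟩
  rintro s ⟨hs0, hs1⟩ x hx hxr
  have hxδ : ‖x‖ < δ := hxr.trans_le (min_le_left _ _)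
  have hxr₀ : ‖x‖ < r₀ := hxr.trans_le (min_le_right _ _)
  have hGne := hGiso x hx hxr₀
  have hGpos : 0 < ‖gradient G x‖ := norm_pos_iff.mpr hGne
  set c : ℝ := s * b + (1 - s) * a with hc
  have hb : 0 < b := ha.trans hab
  have hc0 : 0 ≤ c := by rw [hc]; nlinarith
  have hcb : c ≤ b := by nlinarith
  have hkey := hδ' x hx hxδ
  refine ⟨by positivity, ?_⟩
  rw [grad_combo F G hF hG c x]
  have h1 : ‖gradient F x‖ - ‖c • gradient G x‖ ≤ ‖gradient F x + c • gradient G x‖ := by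
    have := norm_add_le (gradient F x + c • gradient G x) (-(c • gradient G x))
    simp only [add_neg_cancel_right, norm_neg] at this
    linarith
  have h2 : ‖c • gradient G x‖ = c * ‖gradient G x‖ := by
    rw [norm_smul, Real.norm_of_nonneg hc0]
  nlinarith [h1, h2, hkey]
end
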